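/- arXiv:2307.16353 — 7 statements merged into one kernel-verified Lean document; each statement's English description precedes it below -/
import Mathlib

section
/- Let (Ω, ℱ, μ) be a probability space, let Y⁰, Y¹ : Ω → ℝ and W : Ω → ℝ^N be measurable with Y¹ μ-integrable, and let h : ℝ^N → ℝ be measurable with h ∘ W μ-integrable and μ[h ∘ W | σ(Y⁰)] = Y⁰ μ-almost everywhere. Then Y⁰ is μ-integrable and ∫ Y⁰ dμ = ∫ h ∘ W dμ. Moreover, if Y : Ω → ℝ satisfies Y = Y¹ μ-almost everywhere (consistency at a post-treatment time), then the average treatment effect on the treated, τ* := ∫ (Y¹ − Y⁰) dμ, satisfies τ* = ∫ (Y − h ∘ W) dμ. -/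
open MeasureTheory

section CondExp

variable {Ω : Type*} {m m₀ : MeasurableSpace Ω} {μ : Measure Ω} {f g : Ω → ℝ}

theorem integrable_of_condExp_ae_eq (hfg : μ[f | m] =ᵐ[μ] g) : Integrable g μ :=
  integrable_condExp.congr hfg

theorem integral_eq_of_condExp_ae_eq (hm : m ≤ m₀) [SigmaFinite (μ.trim hm)]
    (hfg : μ[f | m] =ᵐ[μ] g) : ∫ ω, g ω ∂μ = ∫ ω, f ω ∂μ :=
  (integral_congr_ae hfg).symm.trans (integral_condExp hm)

end CondExp

theorem integral_sub_eq_integral_sub_of_ae_eq {Ω : Type*} [MeasurableSpace Ω] {μ : Measure Ω}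
    {Y Y₁ Y₀ g : Ω → ℝ} (hY₁ : Integrable Y₁ μ) (hY₀ : Integrable Y₀ μ) (hg : Integrable g μ)
    (hY : Y =ᵐ[μ] Y₁) (hmean : ∫ ω, Y₀ ω ∂μ = ∫ ω, g ω ∂μ) :
    ∫ ω, (Y₁ ω - Y₀ ω) ∂μ = ∫ ω, (Y ω - g ω) ∂μ := by
  rw [integral_sub hY₁ hY₀, integral_sub (hY₁.congr hY.symm) hg, hmean, integral_congr_ae hY]

theorem spsc_att_identification_general {Ω : Type*} [MeasurableSpace Ω] (μ : Measure Ω)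
    [IsProbabilityMeasure μ] {N : ℕ}
    (Y0 Y1 : Ω → ℝ) (W : Ω → Fin N → ℝ) (h : (Fin N → ℝ) → ℝ)
    (hY0 : Measurable Y0)
    (hY1int : Integrable Y1 μ)
    (hint : Integrable (h ∘ W) μ)
    (hbridge : μ[h ∘ W | MeasurableSpace.comap Y0 inferInstance] =ᵐ[μ] Y0) :
    Integrable Y0 μ ∧
    (∫ ω, Y0 ω ∂μ) = (∫ ω, h (W ω) ∂μ) ∧
    ∀ Y : Ω → ℝ, Y =ᵐ[μ] Y1 →
      (∫ ω, (Y1 ω - Y0 ω) ∂μ) = (∫ ω, (Y ω - h (W ω)) ∂μ) := by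
  have hY0int : Integrable Y0 μ := integrable_of_condExp_ae_eq hbridge
  have hmean : ∫ ω, Y0 ω ∂μ = ∫ ω, h (W ω) ∂μ :=
    integral_eq_of_condExp_ae_eq hY0.comap_le hbridge
  exact ⟨hY0int, hmean, fun Y hY =>
    integral_sub_eq_integral_sub_of_ae_eq hY1int hY0int hint hY hmean⟩

/-- Theorem 2 of the paper: if `h` is a synthetic control bridge function for the
treatment-free potential outcome `Y0`, then `Y0` is integrable with mean equal to the mean
of the synthetic control `h ∘ W`; moreover, if `Y = Y1` almost everywhere (post-treatment
consistency), the ATT `∫ (Y1 - Y0) dμ` equals `∫ (Y - h ∘ W) dμ`. -/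
theorem spsc_att_identification {Ω : Type*} [MeasurableSpace Ω] (μ : Measure Ω)
    [IsProbabilityMeasure μ] {N : ℕ}
    (Y0 Y1 : Ω → ℝ) (W : Ω → Fin N → ℝ) (h : (Fin N → ℝ) → ℝ)
    (hY0 : Measurable Y0) (hY1 : Measurable Y1) (hW : Measurable W) (hh : Measurable h)
    (hY1int : Integrable Y1 μ)
    (hint : Integrable (h ∘ W) μ)
    (hbridge : μ[h ∘ W | MeasurableSpace.comap Y0 inferInstance] =ᵐ[μ] Y0) :
    Integrable Y0 μ ∧
    (∫ ω, Y0 ω ∂μ) = (∫ ω, h (W ω) ∂μ) ∧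
    ∀ Y : Ω → ℝ, Y =ᵐ[μ] Y1 →
      (∫ ω, (Y1 ω - Y0 ω) ∂μ) = (∫ ω, (Y ω - h (W ω)) ∂μ) :=
  spsc_att_identification_general μ Y0 Y1 W h hY0 hY1int hint hbridge
end

section
/- Let (Ω, ℱ, μ) be a probability space, let Y, Y⁰, Y¹ : Ω → ℝ, W : Ω → ℝ^N, X₀ : Ω → ℝ^q, X : Ω → ℝ^p be measurable with Y¹ μ-integrable, and let h : ℝ^N × ℝ^q × ℝ^p → ℝ be measurable with h(W, X₀, X) μ-integrable and μ[h(W, X₀, X) | σ(Y⁰, X₀, X)] = Y⁰ μ-almost everywhere (the covariate bridge assumption). Then: (i) if Y = Y⁰ μ-a.e. (pre-treatment consistency), then μ[Y − h(W, X₀, X) | σ(Y, X₀, X)] = 0 μ-a.e.; (ii) Y⁰ is μ-integrable and ∫ Y⁰ dμ = ∫ h(W, X₀, X) dμ; (iii) if Y = Y¹ μ-a.e. (post-treatment consistency), then the average treatment effect on the treated τ* := ∫ (Y¹ − Y⁰) dμ equals ∫ (Y − h(W, X₀, X)) dμ. -/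
open MeasureTheory

/-! Under pre-treatment consistency the conditioning variables `(Y, X₀, X)` and `(Y⁰, X₀, X)`
agree almost surely, so their σ-algebras have the same sets up to null sets. Hence `Y`, which
is `σ(Y, X₀, X)`-measurable, has the same integrals over these sets as
`Y⁰ = μ[h | σ(Y⁰, X₀, X)]`, i.e. as `h`; so `Y` is a version of `μ[h | σ(Y, X₀, X)]` and the
residual has conditional mean zero. Parts (ii) and (iii) follow by integrating the bridge
equation. -/

section CondExp

variable {Ω β E : Type*} {m₀ : MeasurableSpace Ω} [mβ : MeasurableSpace β] {μ : Measure Ω}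
  [NormedAddCommGroup E] [NormedSpace ℝ E] [CompleteSpace E]

theorem ae_eq_condExp_comap_of_ae_eq_condExp_comap [IsFiniteMeasure μ] {T T' : Ω → β}
    (hT : Measurable T) (hT' : Measurable T') (hTT' : T =ᵐ[μ] T') {f g : Ω → E}
    (hf : Integrable f μ) (hg : StronglyMeasurable[mβ.comap T] g)
    (hfg : μ[f | mβ.comap T'] =ᵐ[μ] g) : g =ᵐ[μ] μ[f | mβ.comap T] := by
  have hgi : Integrable g μ := integrable_condExp.congr hfg
  refine ae_eq_condExp_of_forall_setIntegral_eq hT.comap_le hf (fun _ _ _ ↦ hgi.integrableOn)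
    ?_ hg.aestronglyMeasurable
  rintro _ ⟨A, hA, rfl⟩ -
  have hpre : T ⁻¹' A =ᵐ[μ] T' ⁻¹' A := hTT'.preimage A
  calc ∫ ω in T ⁻¹' A, g ω ∂μ
      = ∫ ω in T' ⁻¹' A, g ω ∂μ := setIntegral_congr_set hpre
    _ = ∫ ω in T' ⁻¹' A, (μ[f | mβ.comap T']) ω ∂μ :=
        setIntegral_congr_ae (hT' hA) (hfg.mono fun _ h _ ↦ h.symm)
    _ = ∫ ω in T' ⁻¹' A, f ω ∂μ := setIntegral_condExp hT'.comap_le hf ⟨A, hA, rfl⟩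
    _ = ∫ ω in T ⁻¹' A, f ω ∂μ := setIntegral_congr_set hpre.symm

theorem condExp_sub_ae_eq_zero_of_ae_eq_condExp {m : MeasurableSpace Ω} (hm : m ≤ m₀)
    [SigmaFinite (μ.trim hm)] {f g : Ω → E} (hf : Integrable f μ)
    (hg : StronglyMeasurable[m] g) (hgf : g =ᵐ[μ] μ[f | m]) : μ[g - f | m] =ᵐ[μ] 0 := by
  have hgi : Integrable g μ := integrable_condExp.congr hgf.symm
  filter_upwards [condExp_sub hgi hf m, hgf] with ω hsub hω
  rw [hsub, Pi.sub_apply, condExp_of_stronglyMeasurable hm hg hgi, hω, sub_self, Pi.zero_apply]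

end CondExp

theorem spsc_att_identification_with_covariates_general {Ω : Type*} [MeasurableSpace Ω]
    (μ : Measure Ω) [IsProbabilityMeasure μ] {N q p : ℕ}
    (Y Y0 Y1 : Ω → ℝ) (W : Ω → Fin N → ℝ) (X0 : Ω → Fin q → ℝ) (X : Ω → Fin p → ℝ)
    (h : (Fin N → ℝ) × (Fin q → ℝ) × (Fin p → ℝ) → ℝ)
    (hY : Measurable Y) (hY0 : Measurable Y0)
    (hX0 : Measurable X0) (hX : Measurable X)
    (hY1int : Integrable Y1 μ)
    (hint : Integrable (fun ω => h (W ω, X0 ω, X ω)) μ)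
    (hbridge : μ[(fun ω => h (W ω, X0 ω, X ω)) |
        MeasurableSpace.comap (fun ω => (Y0 ω, X0 ω, X ω)) inferInstance] =ᵐ[μ] Y0) :
    (Y =ᵐ[μ] Y0 →
      μ[(fun ω => Y ω - h (W ω, X0 ω, X ω)) |
          MeasurableSpace.comap (fun ω => (Y ω, X0 ω, X ω)) inferInstance] =ᵐ[μ] 0) ∧
    (Integrable Y0 μ ∧ (∫ ω, Y0 ω ∂μ) = (∫ ω, h (W ω, X0 ω, X ω) ∂μ)) ∧
    (Y =ᵐ[μ] Y1 →
      (∫ ω, (Y1 ω - Y0 ω) ∂μ) = (∫ ω, (Y ω - h (W ω, X0 ω, X ω)) ∂μ)) := by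
  set H : Ω → ℝ := fun ω => h (W ω, X0 ω, X ω)
  set T : Ω → ℝ × (Fin q → ℝ) × (Fin p → ℝ) := fun ω => (Y ω, X0 ω, X ω)
  set T0 : Ω → ℝ × (Fin q → ℝ) × (Fin p → ℝ) := fun ω => (Y0 ω, X0 ω, X ω)
  have hT : Measurable T := hY.prodMk (hX0.prodMk hX)
  have hT0 : Measurable T0 := hY0.prodMk (hX0.prodMk hX)
  have hY0int : Integrable Y0 μ := integrable_condExp.congr hbridge
  have hmean : ∫ ω, Y0 ω ∂μ = ∫ ω, H ω ∂μ := by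
    rw [← integral_congr_ae hbridge, integral_condExp hT0.comap_le]
  refine ⟨fun hpre ↦ ?_, ⟨hY0int, hmean⟩, fun hpost ↦ ?_⟩
  · have hYm : StronglyMeasurable[MeasurableSpace.comap T inferInstance] Y :=
      (measurable_fst.comp (comap_measurable T)).stronglyMeasurable
    have hTT0 : T =ᵐ[μ] T0 := hpre.mono fun ω hω ↦ by simp only [T, T0, hω]
    exact condExp_sub_ae_eq_zero_of_ae_eq_condExp hT.comap_le hint hYm
      (ae_eq_condExp_comap_of_ae_eq_condExp_comap hT hT0 hTT0 hint hYm (hbridge.trans hpre.symm))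
  · rw [integral_sub hY1int hY0int, integral_sub (hY1int.congr hpost.symm) hint,
      integral_congr_ae hpost, hmean]

/-- Theorem 4 of the paper: identification with covariates. If `h` is a covariate
synthetic control bridge function, i.e. `μ[h(W, X0, X) | σ(Y0, X0, X)] = Y0` a.e., then:
(i) under pre-treatment consistency `Y = Y0` a.e., the conditional mean of the residual
`Y - h(W, X0, X)` given `σ(Y, X0, X)` vanishes a.e.;
(ii) `Y0` is integrable with `∫ Y0 = ∫ h(W, X0, X)`;
(iii) under post-treatment consistency `Y = Y1` a.e., the ATT `∫ (Y1 - Y0)` equals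
`∫ (Y - h(W, X0, X))`. -/
theorem spsc_att_identification_with_covariates {Ω : Type*} [MeasurableSpace Ω]
    (μ : Measure Ω) [IsProbabilityMeasure μ] {N q p : ℕ}
    (Y Y0 Y1 : Ω → ℝ) (W : Ω → Fin N → ℝ) (X0 : Ω → Fin q → ℝ) (X : Ω → Fin p → ℝ)
    (h : (Fin N → ℝ) × (Fin q → ℝ) × (Fin p → ℝ) → ℝ)
    (hY : Measurable Y) (hY0 : Measurable Y0) (hY1 : Measurable Y1) (hW : Measurable W)
    (hX0 : Measurable X0) (hX : Measurable X) (hh : Measurable h)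
    (hY1int : Integrable Y1 μ)
    (hint : Integrable (fun ω => h (W ω, X0 ω, X ω)) μ)
    (hbridge : μ[(fun ω => h (W ω, X0 ω, X ω)) |
        MeasurableSpace.comap (fun ω => (Y0 ω, X0 ω, X ω)) inferInstance] =ᵐ[μ] Y0) :
    (Y =ᵐ[μ] Y0 →
      μ[(fun ω => Y ω - h (W ω, X0 ω, X ω)) |
          MeasurableSpace.comap (fun ω => (Y ω, X0 ω, X ω)) inferInstance] =ᵐ[μ] 0) ∧
    (Integrable Y0 μ ∧ (∫ ω, Y0 ω ∂μ) = (∫ ω, h (W ω, X0 ω, X ω) ∂μ)) ∧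
    (Y =ᵐ[μ] Y1 →
      (∫ ω, (Y1 ω - Y0 ω) ∂μ) = (∫ ω, (Y ω - h (W ω, X0 ω, X ω)) ∂μ)) :=
  spsc_att_identification_with_covariates_general μ Y Y0 Y1 W X0 X h hY hY0 hX0 hX hY1int hint
    hbridge
end

section
/- Let (Ω, ℱ, μ) be a probability space, λ = (λ₁,…,λ_r) : Ω → ℝ^r measurable with each coordinate μ-integrable, and e₀, e₁,…,e_N : Ω → ℝ μ-integrable. Let ω₁,…,ω_N ∈ ℝ and suppose μ[e_i | σ(λ, e₀)] = ω_i · e₀ μ-almost everywhere for each i = 1,…,N. Let μ₀, μ₁,…,μ_N ∈ ℝ^r and define W_i := ⟨μ_i, λ⟩ + e_i for i = 1,…,N and Y⁰ := ⟨μ₀, λ⟩ + e₀. If γ ∈ ℝ^N satisfies μ₀ = Σ_{i=1}^N γ_i μ_i and Σ_{i=1}^N γ_i ω_i = 1, then μ[Σ_{i=1}^N γ_i W_i | σ(λ, e₀)] = Y⁰ μ-almost everywhere. -/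
/-!
The factor part `Σ γ i ⟨μ i, λ⟩ = ⟨μ₀, λ⟩` is `σ(λ, e₀)`-measurable, so conditioning leaves it
unchanged, while by linearity the error part `Σ γ i e i` has conditional expectation
`(Σ γ i ω i) e₀ = e₀`.
-/

open MeasureTheory Filter Finset

namespace MeasureTheory

variable {Ω ι E : Type*} {m m₀ : MeasurableSpace Ω} {μ : Measure Ω}
  [NormedAddCommGroup E] [NormedSpace ℝ E] [CompleteSpace E]

theorem condExp_add_of_stronglyMeasurable_left (hm : m ≤ m₀) [SigmaFinite (μ.trim hm)]
    {f g : Ω → E} (hf : StronglyMeasurable[m] f) (hfi : Integrable f μ) (hgi : Integrable g μ) :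
    μ[f + g | m] =ᵐ[μ] f + μ[g | m] := by
  filter_upwards [condExp_add hfi hgi m] with ω hω
  rw [hω, Pi.add_apply, Pi.add_apply, condExp_of_stronglyMeasurable hm hf hfi]

theorem condExp_finsetSum_smul_of_condExp_eq_smul {s : Finset ι} {f : ι → Ω → E} {X : Ω → E}
    (c γ : ι → ℝ) (hf : ∀ i ∈ s, Integrable (f i) μ) (hc : ∀ i ∈ s, μ[f i | m] =ᵐ[μ] c i • X) :
    μ[∑ i ∈ s, γ i • f i | m] =ᵐ[μ] (∑ i ∈ s, γ i * c i) • X := by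
  refine (condExp_finsetSum (fun i hi => (hf i hi).smul (γ i)) m).trans ?_
  refine (eventuallyEq_sum fun i hi => (condExp_smul (γ i) (f i) m).trans
    ((hc i hi).const_smul (γ i))).trans ?_
  simp only [Finset.sum_smul, smul_smul]
  rfl

end MeasureTheory

theorem spsc_ifem_correlated_errors_bridge_general {Ω : Type*} [MeasurableSpace Ω]
    (μ : Measure Ω) [IsProbabilityMeasure μ] {r N : ℕ}
    (lam : Ω → Fin r → ℝ) (e0 : Ω → ℝ) (e : Fin N → Ω → ℝ)
    (hlam : Measurable lam) (he0 : Measurable e0)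
    (hlamInt : ∀ j, Integrable (fun ω => lam ω j) μ)
    (heInt : ∀ i, Integrable (e i) μ)
    (ωc : Fin N → ℝ)
    (hcond : ∀ i, μ[e i | MeasurableSpace.comap (fun ω => (lam ω, e0 ω)) inferInstance]
      =ᵐ[μ] fun ω => ωc i * e0 ω)
    (m0 : Fin r → ℝ) (m : Fin N → Fin r → ℝ) (γ : Fin N → ℝ)
    (hlin : ∀ j, m0 j = ∑ i, γ i * m i j)
    (hw : ∑ i, γ i * ωc i = 1) :
    μ[(fun ω => ∑ i, γ i * ((∑ j, m i j * lam ω j) + e i ω)) |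
        MeasurableSpace.comap (fun ω => (lam ω, e0 ω)) inferInstance]
      =ᵐ[μ] fun ω => (∑ j, m0 j * lam ω j) + e0 ω := by
  have hG := (hlam.prodMk he0).comap_le
  set G := MeasurableSpace.comap (fun ω => (lam ω, e0 ω)) inferInstance
  have hpair : Measurable[G] fun ω => (lam ω, e0 ω) := comap_measurable _
  have hfactor : StronglyMeasurable[G] fun ω => ∑ j, m0 j * lam ω j :=
    (Finset.measurable_sum _ fun j _ =>
      (hpair.fst.eval (a := j)).const_mul (m0 j)).stronglyMeasurable
  have hsplit : (fun ω => ∑ i, γ i * ((∑ j, m i j * lam ω j) + e i ω))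
      = (fun ω => ∑ j, m0 j * lam ω j) + ∑ i, γ i • e i := by
    funext ω
    simp only [hlin, mul_add, sum_add_distrib, mul_sum, sum_mul, Pi.add_apply, Finset.sum_apply,
      Pi.smul_apply, smul_eq_mul, mul_assoc]
    rw [sum_comm]
  have herror : μ[∑ i, γ i • e i | G] =ᵐ[μ] e0 := by
    have h := condExp_finsetSum_smul_of_condExp_eq_smul (s := univ) ωc γ (fun i _ => heInt i)
      (fun i _ => hcond i)
    rwa [hw, one_smul] at h
  rw [hsplit]
  exact (condExp_add_of_stronglyMeasurable_left hG hfactor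
    (integrable_finsetSum _ fun j _ => (hlamInt j).const_mul _)
    (integrable_finsetSum' _ fun i _ => (heInt i).smul _)).trans
    ((EventuallyEq.refl _ _).add herror)

/-- In the interactive fixed effects model with correlated errors
(`Y0 = ⟨μ₀, λ⟩ + e₀`, `W i = ⟨μ i, λ⟩ + e i`, `μ[e i | σ(λ, e₀)] = ω i • e₀`),
any weight vector `γ` with `μ₀ = Σ γ i • μ i` and `Σ γ i * ω i = 1` yields a linear
synthetic control satisfying Condition 1 of the paper:
`μ[Σ γ i • W i | σ(λ, e₀)] = Y0` a.e. -/
theorem spsc_ifem_correlated_errors_bridge {Ω : Type*} [MeasurableSpace Ω]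
    (μ : Measure Ω) [IsProbabilityMeasure μ] {r N : ℕ}
    (lam : Ω → Fin r → ℝ) (e0 : Ω → ℝ) (e : Fin N → Ω → ℝ)
    (hlam : Measurable lam) (he0 : Measurable e0)
    (hlamInt : ∀ j, Integrable (fun ω => lam ω j) μ)
    (he0Int : Integrable e0 μ)
    (heInt : ∀ i, Integrable (e i) μ)
    (ωc : Fin N → ℝ)
    (hcond : ∀ i, μ[e i | MeasurableSpace.comap (fun ω => (lam ω, e0 ω)) inferInstance]
      =ᵐ[μ] fun ω => ωc i * e0 ω)
    (m0 : Fin r → ℝ) (m : Fin N → Fin r → ℝ) (γ : Fin N → ℝ)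
    (hlin : ∀ j, m0 j = ∑ i, γ i * m i j)
    (hw : ∑ i, γ i * ωc i = 1) :
    μ[(fun ω => ∑ i, γ i * ((∑ j, m i j * lam ω j) + e i ω)) |
        MeasurableSpace.comap (fun ω => (lam ω, e0 ω)) inferInstance]
      =ᵐ[μ] fun ω => (∑ j, m0 j * lam ω j) + e0 ω :=
  spsc_ifem_correlated_errors_bridge_general μ lam e0 e hlam he0 hlamInt heInt ωc hcond m0 m γ hlin
    hw
end

section
/- Let (Ω, ℱ, μ) be a probability space, λ : Ω → ℝ^r measurable with square-integrable coordinates, and e₀ ∈ L²(μ) with Var(e₀) > 0, with λ and e₀ independent. Let e₁,…,e_N : Ω → ℝ be μ-integrable with μ[e_i | σ(λ, e₀)] = 0 μ-almost everywhere for i = 1,…,N. Let μ₀, μ₁,…,μ_N ∈ ℝ^r and define W_i := ⟨μ_i, λ⟩ + e_i and Y⁰ := ⟨μ₀, λ⟩ + e₀. Then there is no γ ∈ ℝ^N with μ[Σ_{i=1}^N γ_i W_i | σ(λ, e₀)] = Y⁰ μ-almost everywhere. -/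
/-!
Mean independence of the donor errors makes the conditional expectation of `Σ γ i * W i` the
linear form `Σ γ i * ⟨m i, λ⟩`, which is already `σ(λ, e₀)`-measurable. The bridge equation then
forces `e₀` to be almost surely a measurable function of `λ`; independent of `λ`, `e₀` is then
independent of itself, so its variance, which is its covariance with itself, vanishes.
-/

open MeasureTheory ProbabilityTheory

namespace ProbabilityTheory

variable {Ω : Type*} {mΩ : MeasurableSpace Ω} {μ : Measure Ω} {X : Ω → ℝ}

lemma IndepFun.variance_eq_zero_self (h : IndepFun X X μ) (hX : MemLp X 2 μ) :
    Var[X; μ] = 0 := by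
  rw [← covariance_self hX.aemeasurable]
  exact h.covariance_eq_zero hX hX

lemma IndepFun.variance_eq_zero_of_ae_eq_comp {β : Type*} [MeasurableSpace β] {Y : Ω → β}
    {f : β → ℝ} (h : IndepFun Y X μ) (hf : Measurable f) (hXY : X =ᵐ[μ] f ∘ Y)
    (hX : MemLp X 2 μ) : Var[X; μ] = 0 :=
  ((h.comp hf measurable_id).congr hXY.symm .rfl).variance_eq_zero_self hX

end ProbabilityTheory

namespace MeasureTheory

variable {Ω : Type*} {m mΩ : MeasurableSpace Ω} {μ : Measure Ω}

lemma condExp_sum_mul_ae_eq_zero {ι : Type*} (s : Finset ι) (c : ι → ℝ) {f : ι → Ω → ℝ}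
    (hf : ∀ i, Integrable (f i) μ) (h : ∀ i, μ[f i|m] =ᵐ[μ] 0) :
    μ[fun ω => ∑ i ∈ s, c i * f i ω|m] =ᵐ[μ] 0 := by
  have hsum : (fun ω => ∑ i ∈ s, c i * f i ω) = ∑ i ∈ s, c i • f i := by
    ext ω; simp [Finset.sum_apply]
  rw [hsum]
  refine (condExp_finsetSum (fun i _ => (hf i).smul (c i)) m).trans ?_
  have hzero : ∀ i, μ[c i • f i|m] =ᵐ[μ] 0 := fun i =>
    (condExp_smul (c i) (f i) m).trans (by filter_upwards [h i] with ω hω; simp [hω])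
  filter_upwards [(Filter.eventually_all_finset s).mpr fun i _ => hzero i] with ω hω
  simp [Finset.sum_apply, Finset.sum_eq_zero hω]

lemma condExp_add_ae_eq_of_condExp_ae_eq_zero {E : Type*} [NormedAddCommGroup E]
    [NormedSpace ℝ E] [CompleteSpace E] {f g : Ω → E} (hm : m ≤ mΩ) [IsFiniteMeasure μ]
    (hf : StronglyMeasurable[m] f) (hfi : Integrable f μ) (hgi : Integrable g μ)
    (hg : μ[g|m] =ᵐ[μ] 0) : μ[f + g|m] =ᵐ[μ] f := by
  refine (condExp_add hfi hgi m).trans ?_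
  rw [condExp_of_stronglyMeasurable hm hf hfi]
  filter_upwards [hg] with ω hω
  simp [hω]

end MeasureTheory

/-- In the interactive fixed effects model with uncorrelated (mean-independent) errors,
with `λ` and `e₀` independent, `Var(e₀) > 0`, and `μ[e i | σ(λ, e₀)] = 0` for the donor
errors, no linear synthetic control `Σ γ i • W i` satisfies Condition 1 of the paper,
i.e. there is no `γ` with `μ[Σ γ i • W i | σ(λ, e₀)] = Y0` a.e. -/
theorem spsc_ifem_independent_errors_no_linear_bridge {Ω : Type*} [MeasurableSpace Ω]
    (μ : Measure Ω) [IsProbabilityMeasure μ] {r N : ℕ}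
    (lam : Ω → Fin r → ℝ) (e0 : Ω → ℝ) (e : Fin N → Ω → ℝ)
    (hlam : Measurable lam) (he0 : Measurable e0)
    (hlam2 : ∀ j, MemLp (fun ω => lam ω j) 2 μ)
    (he02 : MemLp e0 2 μ)
    (hvar : 0 < variance e0 μ)
    (hind : IndepFun lam e0 μ)
    (heInt : ∀ i, Integrable (e i) μ)
    (hcond : ∀ i, μ[e i | MeasurableSpace.comap (fun ω => (lam ω, e0 ω)) inferInstance]
      =ᵐ[μ] 0)
    (m0 : Fin r → ℝ) (m : Fin N → Fin r → ℝ) :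
    ¬ ∃ γ : Fin N → ℝ,
      μ[(fun ω => ∑ i, γ i * ((∑ j, m i j * lam ω j) + e i ω)) |
          MeasurableSpace.comap (fun ω => (lam ω, e0 ω)) inferInstance]
        =ᵐ[μ] fun ω => (∑ j, m0 j * lam ω j) + e0 ω := by
  rintro ⟨γ, hbridge⟩
  let T : Ω → (Fin r → ℝ) × ℝ := fun ω => (lam ω, e0 ω)
  let g : (Fin r → ℝ) → ℝ := fun v => ∑ i, γ i * ∑ j, m i j * v j
  have hg : Measurable g := by fun_prop
  have hgT : StronglyMeasurable[MeasurableSpace.comap T inferInstance] (g ∘ lam) :=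
    ((hg.comp measurable_fst).comp (Measurable.of_comap_le le_rfl)).stronglyMeasurable
  have hgi : Integrable (g ∘ lam) μ := by
    have := fun j => (hlam2 j).integrable one_le_two
    simp only [g, Function.comp_def]
    fun_prop
  have hsplit : (fun ω => ∑ i, γ i * ((∑ j, m i j * lam ω j) + e i ω))
      = g ∘ lam + fun ω => ∑ i, γ i * e i ω := by
    ext ω; simp [g, mul_add, Finset.sum_add_distrib]
  have hcondExp := condExp_add_ae_eq_of_condExp_ae_eq_zero (hlam.prodMk he0).comap_le hgT hgi
    (integrable_finsetSum _ fun i _ => (heInt i).const_mul (γ i))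
    (condExp_sum_mul_ae_eq_zero Finset.univ γ heInt hcond)
  rw [← hsplit] at hcondExp
  have he0_eq : e0 =ᵐ[μ] (fun v => g v - ∑ j, m0 j * v j) ∘ lam := by
    filter_upwards [hcondExp.symm.trans hbridge] with ω hω
    simp only [Function.comp_apply] at hω ⊢
    linarith
  exact hvar.ne' (hind.variance_eq_zero_of_ae_eq_comp (by fun_prop) he0_eq he02)
end

section
/- Let r, N ∈ ℕ, μ₀, μ₁,…,μ_N ∈ ℝ^r, and γ† ∈ ℝ^N with μ₀ = Σ_{i=1}^N γ_i† μ_i. Let λ : ℕ → ℝ^r and e_i : ℕ → ℝ (i = 0,1,…,N) be sequences such that, as T → ∞: (1/T)Σ_{t=1}^T λ_t → 0, (1/T)Σ_{t=1}^T λ_t λ_tᵀ → Λ for some matrix Λ ∈ ℝ^{r×r}, (1/T)Σ_{t=1}^T e_{it} e_{jt} → σ² if i = j and → 0 if i ≠ j (i, j ∈ {0,…,N}), and (1/T)Σ_{t=1}^T e_{it} λ_t → 0 for every i. Define W_{it} := ⟨μ_i, λ_t⟩ + e_{it} and Y_t := ⟨μ₀, λ_t⟩ + e_{0t}. Then for every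 γ ∈ ℝ^N, the least-squares criterion Q_T(γ) := (1/T)Σ_{t=1}^T (Y_t − Σ_{i=1}^N γ_i W_{it})² converges, as T → ∞, to Q∞(γ) := m(γ)ᵀ Λ m(γ) + (1 + Σ_{i=1}^N γ_i²) σ², where m(γ) := Σ_{i=1}^N (γ_i† − γ_i) μ_i. -/
/-!
Since `μ₀ = Σ γ†ᵢ μᵢ`, the residual `Y_t − Σ γᵢ W_{it}` equals `⟨m(γ), λ_t⟩ + ⟨(1, −γ), e_t⟩`,
a fixed linear combination of the stacked vector `(λ_t, e_t)`. The Cesàro mean of its square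
is therefore a quadratic form in the second-moment averages of `(λ_t, e_t)`, and these converge
to the block-diagonal matrix `diag(Λ, σ² I)`.
-/

open Filter Finset Matrix

noncomputable def cesaroMean (f : ℕ → ℝ) (T : ℕ) : ℝ :=
  (1 / (T : ℝ)) * ∑ t ∈ range T, f t

theorem cesaroMean_sq_dotProduct {ι : Type*} [Fintype ι] (x : ℕ → ι → ℝ) (c : ι → ℝ)
    (T : ℕ) :
    cesaroMean (fun t => (c ⬝ᵥ x t) ^ 2) T
      = ∑ a, ∑ b, c a * c b * cesaroMean (fun t => x t a * x t b) T := by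
  have hsq : ∀ t, (c ⬝ᵥ x t) ^ 2 = ∑ a, ∑ b, c a * c b * (x t a * x t b) := fun t => by
    rw [sq, dotProduct, sum_mul_sum]
    exact sum_congr rfl fun a _ => sum_congr rfl fun b _ => by ring
  simp only [cesaroMean, hsq, mul_sum]
  rw [sum_comm]
  refine sum_congr rfl fun a _ => ?_
  rw [sum_comm]
  exact sum_congr rfl fun b _ => sum_congr rfl fun t _ => by ring

theorem tendsto_cesaroMean_sq_dotProduct {ι : Type*} [Fintype ι] {x : ℕ → ι → ℝ}
    {S : Matrix ι ι ℝ}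
    (hS : ∀ a b, Tendsto (cesaroMean fun t => x t a * x t b) atTop (nhds (S a b)))
    (c : ι → ℝ) :
    Tendsto (cesaroMean fun t => (c ⬝ᵥ x t) ^ 2) atTop (nhds (c ⬝ᵥ S *ᵥ c)) := by
  have hlim : c ⬝ᵥ S *ᵥ c = ∑ a, ∑ b, c a * c b * S a b := by
    simp only [dotProduct, mulVec, mul_sum]
    exact sum_congr rfl fun a _ => sum_congr rfl fun b _ => by ring
  rw [funext (cesaroMean_sq_dotProduct x c), hlim]
  exact tendsto_finsetSum _ fun a _ => tendsto_finsetSum _ fun b _ => (hS a b).const_mul _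

theorem ols_residual_eq_sumElim_dotProduct {r N : ℕ} {m0 : Fin r → ℝ} {m : Fin N → Fin r → ℝ}
    {γdag : Fin N → ℝ} (hγdag : ∀ j, m0 j = ∑ i, γdag i * m i j)
    (lam : ℕ → Fin r → ℝ) (e : Fin (N + 1) → ℕ → ℝ) (γ : Fin N → ℝ) (t : ℕ) :
    ((∑ j, m0 j * lam t j) + e 0 t) - ∑ i, γ i * ((∑ j, m i j * lam t j) + e i.succ t)
      = Sum.elim (fun j => ∑ i, (γdag i - γ i) * m i j) (Fin.cons 1 (-γ))
          ⬝ᵥ Sum.elim (lam t) (fun i => e i t) := by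
  have hfactor : (∑ j, (∑ i, (γdag i - γ i) * m i j) * lam t j)
      = (∑ j, m0 j * lam t j) - ∑ i, γ i * ∑ j, m i j * lam t j := by
    simp only [hγdag, sub_mul, sum_mul, sum_sub_distrib, mul_sum, mul_assoc]
    rw [sum_comm (γ := Fin r), sum_comm (γ := Fin r)]
  have herror : (Fin.cons 1 (-γ) : Fin (N + 1) → ℝ) ⬝ᵥ (fun i => e i t)
      = e 0 t - ∑ i, γ i * e i.succ t := by
    simp [dotProduct, Fin.sum_univ_succ, sub_eq_add_neg]
  rw [sumElim_dotProduct_sumElim, herror, dotProduct, hfactor]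
  simp only [mul_add, sum_add_distrib]
  ring

theorem sumElim_dotProduct_fromBlocks_mulVec {ι κ R : Type*} [Fintype ι] [Fintype κ]
    [NonUnitalNonAssocSemiring R] (A : Matrix ι ι R) (D : Matrix κ κ R) (u : ι → R)
    (v : κ → R) :
    Sum.elim u v ⬝ᵥ fromBlocks A 0 0 D *ᵥ Sum.elim u v = u ⬝ᵥ A *ᵥ u + v ⬝ᵥ D *ᵥ v := by
  simp [fromBlocks_mulVec, sumElim_dotProduct_sumElim]

theorem tendsto_cesaroMean_sumElim_mul {ι κ : Type*} [DecidableEq κ] {x : ℕ → ι → ℝ}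
    {y : ℕ → κ → ℝ} {A : Matrix ι ι ℝ} {σ2 : ℝ}
    (hx : ∀ j k, Tendsto (cesaroMean fun t => x t j * x t k) atTop (nhds (A j k)))
    (hy : ∀ i i', Tendsto (cesaroMean fun t => y t i * y t i') atTop
      (nhds (if i = i' then σ2 else 0)))
    (hxy : ∀ i j, Tendsto (cesaroMean fun t => y t i * x t j) atTop (nhds 0))
    (a b : ι ⊕ κ) :
    Tendsto (cesaroMean fun t => Sum.elim (x t) (y t) a * Sum.elim (x t) (y t) b) atTop
      (nhds (fromBlocks A 0 0 (diagonal fun _ => σ2) a b)) := by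
  rcases a with j | i <;> rcases b with k | i'
  · exact hx j k
  · simpa [mul_comm] using hxy i' j
  · exact hxy i k
  · simpa [diagonal_apply] using hy i i'

theorem spsc_ols_criterion_limit_general {r N : ℕ}
    (m0 : Fin r → ℝ) (m : Fin N → Fin r → ℝ)
    (γdag : Fin N → ℝ) (hγdag : ∀ j, m0 j = ∑ i, γdag i * m i j)
    (lam : ℕ → Fin r → ℝ) (e : Fin (N + 1) → ℕ → ℝ)
    (Λ : Matrix (Fin r) (Fin r) ℝ) (σ2 : ℝ)
    (hΛ : ∀ j k, Tendsto
      (fun T : ℕ => (1 / (T : ℝ)) * ∑ t ∈ Finset.range T, lam t j * lam t k)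
      atTop (nhds (Λ j k)))
    (he : ∀ i j : Fin (N + 1), Tendsto
      (fun T : ℕ => (1 / (T : ℝ)) * ∑ t ∈ Finset.range T, e i t * e j t)
      atTop (nhds (if i = j then σ2 else 0)))
    (helam : ∀ (i : Fin (N + 1)) (j : Fin r), Tendsto
      (fun T : ℕ => (1 / (T : ℝ)) * ∑ t ∈ Finset.range T, e i t * lam t j)
      atTop (nhds 0)) :
    ∀ γ : Fin N → ℝ, Tendsto
      (fun T : ℕ => (1 / (T : ℝ)) * ∑ t ∈ Finset.range T,
        (((∑ j, m0 j * lam t j) + e 0 t)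
          - ∑ i, γ i * ((∑ j, m i j * lam t j) + e i.succ t)) ^ 2)
      atTop
      (nhds ((∑ j, ∑ k,
          (∑ i, (γdag i - γ i) * m i j) * Λ j k * (∑ i, (γdag i - γ i) * m i k))
        + (1 + ∑ i, (γ i) ^ 2) * σ2)) := by
  intro γ
  set M : Fin r → ℝ := fun j => ∑ i, (γdag i - γ i) * m i j
  set d : Fin (N + 1) → ℝ := Fin.cons 1 (-γ)
  have hsignal : M ⬝ᵥ Λ *ᵥ M = ∑ j, ∑ k, M j * Λ j k * M k := by
    simp only [dotProduct, mulVec, mul_sum, mul_assoc]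
  have hnoise : d ⬝ᵥ diagonal (fun _ => σ2) *ᵥ d = (1 + ∑ i, γ i ^ 2) * σ2 := by
    simp only [d, diagonal_const_mulVec, dotProduct, Pi.smul_apply, smul_eq_mul,
      Fin.sum_univ_succ, Fin.cons_zero, Fin.cons_succ, Pi.neg_apply, mul_neg, neg_mul, neg_neg,
      mul_one, one_mul, add_mul, sum_mul, add_right_inj]
    exact sum_congr rfl fun i _ => by ring
  have hlim := tendsto_cesaroMean_sq_dotProduct
    (tendsto_cesaroMean_sumElim_mul hΛ he helam) (Sum.elim M d)
  rw [sumElim_dotProduct_fromBlocks_mulVec, hsignal, hnoise] at hlim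
  simp only [ols_residual_eq_sumElim_dotProduct hγdag]
  exact hlim

/-- Deterministic version of the probability-limit computation (S.3) in Supplement S1.1
of the paper: under the stated Cesàro-limit conditions on the latent factors `λ_t` and
errors `e_{it}` in the interactive fixed effects model, the least-squares criterion
`Q_T(γ) = (1/T) Σ_t (Y_t − Σ_i γ_i W_{it})²` converges, for every `γ`, to
`m(γ)ᵀ Λ m(γ) + (1 + Σ_i γ_i²) σ²` where `m(γ) = Σ_i (γ†_i − γ_i) μ_i`. -/
theorem spsc_ols_criterion_limit {r N : ℕ}
    (m0 : Fin r → ℝ) (m : Fin N → Fin r → ℝ)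
    (γdag : Fin N → ℝ) (hγdag : ∀ j, m0 j = ∑ i, γdag i * m i j)
    (lam : ℕ → Fin r → ℝ) (e : Fin (N + 1) → ℕ → ℝ)
    (Λ : Matrix (Fin r) (Fin r) ℝ) (σ2 : ℝ)
    (hlam : ∀ j, Tendsto (fun T : ℕ => (1 / (T : ℝ)) * ∑ t ∈ Finset.range T, lam t j)
      atTop (nhds 0))
    (hΛ : ∀ j k, Tendsto
      (fun T : ℕ => (1 / (T : ℝ)) * ∑ t ∈ Finset.range T, lam t j * lam t k)
      atTop (nhds (Λ j k)))
    (he : ∀ i j : Fin (N + 1), Tendsto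
      (fun T : ℕ => (1 / (T : ℝ)) * ∑ t ∈ Finset.range T, e i t * e j t)
      atTop (nhds (if i = j then σ2 else 0)))
    (helam : ∀ (i : Fin (N + 1)) (j : Fin r), Tendsto
      (fun T : ℕ => (1 / (T : ℝ)) * ∑ t ∈ Finset.range T, e i t * lam t j)
      atTop (nhds 0)) :
    ∀ γ : Fin N → ℝ, Tendsto
      (fun T : ℕ => (1 / (T : ℝ)) * ∑ t ∈ Finset.range T,
        (((∑ j, m0 j * lam t j) + e 0 t)
          - ∑ i, γ i * ((∑ j, m i j * lam t j) + e i.succ t)) ^ 2)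
      atTop
      (nhds ((∑ j, ∑ k,
          (∑ i, (γdag i - γ i) * m i j) * Λ j k * (∑ i, (γdag i - γ i) * m i k))
        + (1 + ∑ i, (γ i) ^ 2) * σ2)) :=
  spsc_ols_criterion_limit_general m0 m γdag hγdag lam e Λ σ2 hΛ he helam
end

section
/- Let Λ ∈ ℝ^{r×r} be positive semidefinite, σ² > 0, μ₁,…,μ_N ∈ ℝ^r, and γ† ∈ ℝ^N with γ† ≠ 0. Define Q∞(γ) := m(γ)ᵀ Λ m(γ) + (1 + ‖γ‖²) σ², where m(γ) := Σ_{i=1}^N (γ_i† − γ_i) μ_i. Then there exists γ ∈ ℝ^N with Q∞(γ) < Q∞(γ†); in particular, γ† is not a minimizer of Q∞. -/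
/-!
Since `m(γ†) = 0`, the term `m(γ)ᵀ Λ m(γ)` has a critical point at `γ = γ†`, while the term
`‖γ‖² σ²` does not. Along the shrinking ray `γ = (1 - t) γ†` the first term is `t² c` with
`c ≥ 0` and the second drops by `(2t - t²) ‖γ†‖² σ²`, so `Q∞` decreases for small `t > 0`.
-/

open Matrix Finset

theorem exists_sq_mul_add_one_sub_sq_mul_lt {K : Type*} [Field K] [LinearOrder K]
    [IsStrictOrderedRing K] {c a : K} (hc : 0 ≤ c) (ha : 0 < a) :
    ∃ t : K, t ^ 2 * c + (1 - t) ^ 2 * a < a := by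
  have hca : 0 < c + a := by linarith
  -- with `t = a / (c + a)` the left-hand side equals `a - t * a`
  refine ⟨a / (c + a), ?_⟩
  have ht : a / (c + a) * (c + a) = a := div_mul_cancel₀ a hca.ne'
  nlinarith [mul_pos (div_pos ha hca) ha]

theorem sum_sum_sub_mul_mul_eq_dotProduct_mulVec {ι κ R : Type*} [Fintype ι] [Fintype κ]
    [CommRing R] (a b : ι → R) (M : ι → κ → R) (A : Matrix κ κ R) :
    ∑ j, ∑ k, (∑ i, (a i - b i) * M i j) * A j k * (∑ i, (a i - b i) * M i k)
      = ((a - b) ᵥ* of M) ⬝ᵥ A *ᵥ ((a - b) ᵥ* of M) := by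
  simp only [dotProduct, mulVec, vecMul, of_apply, Pi.sub_apply, mul_sum, mul_assoc]

/-- Supplement S1.1 of the paper: the true synthetic control weight vector `γ†` is not a
minimizer of the limiting OLS criterion
`Q∞(γ) = m(γ)ᵀ Λ m(γ) + (1 + ‖γ‖²) σ²`, `m(γ) = Σ_i (γ†_i − γ_i) μ_i`,
whenever `Λ` is positive semidefinite, `σ² > 0`, and `γ† ≠ 0`: some `γ` achieves a
strictly smaller value. -/
theorem spsc_ols_inconsistency {r N : ℕ}
    (Λ : Matrix (Fin r) (Fin r) ℝ) (hΛ : Λ.PosSemidef)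
    (σ2 : ℝ) (hσ2 : 0 < σ2)
    (m : Fin N → Fin r → ℝ)
    (γdag : Fin N → ℝ) (hγdag : γdag ≠ 0) :
    ∃ γ : Fin N → ℝ,
      (∑ j, ∑ k, (∑ i, (γdag i - γ i) * m i j) * Λ j k * (∑ i, (γdag i - γ i) * m i k))
        + (1 + ∑ i, (γ i) ^ 2) * σ2
      < (∑ j, ∑ k,
          (∑ i, (γdag i - γdag i) * m i j) * Λ j k * (∑ i, (γdag i - γdag i) * m i k))
        + (1 + ∑ i, (γdag i) ^ 2) * σ2 := by
  set v := γdag ᵥ* of m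
  have hc : 0 ≤ v ⬝ᵥ Λ *ᵥ v := by simpa using hΛ.dotProduct_mulVec_nonneg v
  have hs : 0 < ∑ i, γdag i ^ 2 := by
    simpa [dotProduct, sq] using dotProduct_star_self_pos_iff.mpr hγdag
  obtain ⟨t, ht⟩ := exists_sq_mul_add_one_sub_sq_mul_lt hc (mul_pos hσ2 hs)
  refine ⟨(1 - t) • γdag, ?_⟩
  have hshrink : γdag - (1 - t) • γdag = t • γdag := by
    rw [sub_smul, one_smul, sub_sub_cancel]
  rw [sum_sum_sub_mul_mul_eq_dotProduct_mulVec, sum_sum_sub_mul_mul_eq_dotProduct_mulVec,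
    sub_self, hshrink, zero_vecMul, zero_dotProduct, smul_vecMul, mulVec_smul, smul_dotProduct,
    dotProduct_smul]
  simp only [Pi.smul_apply, smul_eq_mul, mul_pow, ← mul_sum]
  linarith
end

section
/- Let (Ω, ℱ, μ) be a probability space, W : Ω → {0,1}² and Y : Ω → {0,1} measurable, and suppose μ(W = w) > 0 for each of the four values w ∈ {0,1}². Then there exists a function q : {0,1}² → ℝ such that μ[q ∘ W | σ(Y)] = 0 μ-almost everywhere, yet q ∘ W is not μ-almost everywhere equal to 0. In particular, the completeness condition fails. -/
open MeasureTheory Matrix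

/-! With `Y` taking fewer values than `W`, the conditional expectation `μ[q ∘ W | σ(Y)]` is
determined by the integrals of `q ∘ W` over the fibres of `Y`, and these form the image of `q`
under the matrix of joint probabilities `μ(Y = y, W = w)`. That matrix has more columns than rows,
so it kills some `q ≠ 0`; since every value of `W` has positive probability, `q ∘ W` is then not
a.e. zero. -/

theorem Matrix.exists_ne_zero_mulVec_eq_zero_of_card_lt {m n K : Type*} [Fintype m] [Fintype n]
    [Field K] (M : Matrix m n K) (h : Fintype.card m < Fintype.card n) :
    ∃ v ≠ 0, M *ᵥ v = 0 := by
  obtain ⟨v, hv, hv0⟩ := Submodule.exists_mem_ne_zero_of_ne_bot <|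
    LinearMap.ker_ne_bot_of_finrank_lt (f := M.mulVecLin) (by simpa using h)
  exact ⟨v, hv0, hv⟩

section

variable {Ω α : Type*} [MeasurableSpace Ω] {μ : Measure Ω}

theorem not_comp_ae_eq_zero {M : Type*} [Zero M] {X : Ω → α} {q : α → M}
    (hpos : ∀ a, μ (X ⁻¹' {a}) ≠ 0) (hq : q ≠ 0) : ¬ q ∘ X =ᵐ[μ] 0 := by
  obtain ⟨a, ha⟩ := Function.ne_iff.mp hq
  intro h
  refine hpos a (measure_mono_null (fun ω (hω : X ω = a) => ?_) (ae_iff.mp h))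
  simpa [hω] using ha

variable [MeasurableSpace α] [MeasurableSingletonClass α] [Fintype α] [IsFiniteMeasure μ]
  {X : Ω → α}

theorem setIntegral_comp_eq_sum {E : Type*} [NormedAddCommGroup E] [NormedSpace ℝ E]
    [CompleteSpace E] (hX : Measurable X) (q : α → E) (s : Set Ω) :
    ∫ ω in s, q (X ω) ∂μ = ∑ a, μ.real (s ∩ X ⁻¹' {a}) • q a := by
  rw [← integral_map hX.aemeasurable AEStronglyMeasurable.of_discrete,
    integral_fintype Integrable.of_finite]
  simp only [measureReal_def, Measure.map_apply hX (measurableSet_singleton _),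
    Measure.restrict_apply (hX (measurableSet_singleton _)), Set.inter_comm]

theorem condExp_comap_ae_eq_zero_of_setIntegral_fiber_eq_zero (hX : Measurable X) {f : Ω → ℝ}
    (hf : Integrable f μ) (h : ∀ a, ∫ ω in X ⁻¹' {a}, f ω ∂μ = 0) :
    μ[f | MeasurableSpace.comap X inferInstance] =ᵐ[μ] 0 := by
  classical
  have hset : ∀ s, MeasurableSet[MeasurableSpace.comap X inferInstance] s →
      ∫ ω in s, f ω ∂μ = 0 := by
    rintro _ ⟨t, -, rfl⟩
    have hfibres : X ⁻¹' t = ⋃ a ∈ t.toFinset, X ⁻¹' {a} := by ext; simp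
    rw [hfibres, integral_biUnion_finset _ (fun a _ => hX (measurableSet_singleton a))
      (fun a _ b _ hab => (Set.disjoint_singleton.2 hab).preimage X) (fun _ _ => hf.integrableOn)]
    exact Finset.sum_eq_zero fun a _ => h a
  refine (ae_eq_condExp_of_forall_setIntegral_eq hX.comap_le hf (fun _ _ _ => integrableOn_zero)
    (fun s hs _ => ?_) stronglyMeasurable_zero.aestronglyMeasurable).symm
  simp [hset s hs]

end

section

variable {Ω α β : Type*} [MeasurableSpace Ω] {μ : Measure Ω}
  [MeasurableSpace α] [MeasurableSingletonClass α] [Fintype α] {W : Ω → α} {Y : Ω → β}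

def jointProbMatrix (μ : Measure Ω) (Y : Ω → β) (W : Ω → α) : Matrix β α ℝ :=
  fun y w => μ.real (Y ⁻¹' {y} ∩ W ⁻¹' {w})

theorem setIntegral_fiber_eq_jointProbMatrix_mulVec [IsFiniteMeasure μ] (hW : Measurable W)
    (q : α → ℝ) (y : β) :
    ∫ ω in Y ⁻¹' {y}, q (W ω) ∂μ = (jointProbMatrix μ Y W *ᵥ q) y := by
  simp [setIntegral_comp_eq_sum hW, mulVec, dotProduct, jointProbMatrix]

theorem exists_condExp_comap_ae_eq_zero_of_card_lt [MeasurableSpace β]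
    [MeasurableSingletonClass β] [Fintype β] [IsFiniteMeasure μ]
    (hW : Measurable W) (hY : Measurable Y) (hpos : ∀ w, μ (W ⁻¹' {w}) ≠ 0)
    (hcard : Fintype.card β < Fintype.card α) :
    ∃ q : α → ℝ, μ[q ∘ W | MeasurableSpace.comap Y inferInstance] =ᵐ[μ] 0 ∧ ¬ q ∘ W =ᵐ[μ] 0 := by
  obtain ⟨q, hq, hker⟩ := (jointProbMatrix μ Y W).exists_ne_zero_mulVec_eq_zero_of_card_lt hcard
  have hint : Integrable (q ∘ W) μ := Integrable.of_finite.comp_measurable hW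
  refine ⟨q, condExp_comap_ae_eq_zero_of_setIntegral_fiber_eq_zero hY hint fun y => ?_,
    not_comp_ae_eq_zero hpos hq⟩
  simp [setIntegral_fiber_eq_jointProbMatrix_mulVec hW, hker]

end

/-- Failure of completeness with a binary outcome and two binary donors
(Supplement S3.3, equation (S.11) of the paper): if `W : Ω → {0,1}²` takes each of its
four values with positive probability and `Y : Ω → {0,1}`, then there exists a function
`q` with `μ[q ∘ W | σ(Y)] = 0` a.e. but `q ∘ W` not a.e. zero. -/
theorem spsc_completeness_fails_binary {Ω : Type*} [MeasurableSpace Ω]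
    (μ : Measure Ω) [IsProbabilityMeasure μ]
    (W : Ω → Fin 2 × Fin 2) (Y : Ω → Fin 2)
    (hW : Measurable W) (hY : Measurable Y)
    (hpos : ∀ w : Fin 2 × Fin 2, 0 < μ {ω | W ω = w}) :
    ∃ q : Fin 2 × Fin 2 → ℝ,
      μ[q ∘ W | MeasurableSpace.comap Y inferInstance] =ᵐ[μ] 0 ∧
      ¬ (q ∘ W =ᵐ[μ] 0) :=
  exists_condExp_comap_ae_eq_zero_of_card_lt hW hY (fun w => (hpos w).ne') (by decide)
end
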